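/- arXiv:1110.4274 — 3 statements merged into one kernel-verified Lean document; each statement's English description precedes it below -/
import Mathlib

section
/- Let L be a language containing a binary relation symbol < and let T be a complete satisfiable L-theory that is weakly o-minimal. Then T is fully VC-minimal. -/
open FirstOrder Language

universe w

/-- `S` is convex with respect to the strict order `r`. -/
def IsRConvex {X : Type*} (r : X → X → Prop) (S : Set X) : Prop :=
  ∀ a b c : X, r a b → r b c → a ∈ S → c ∈ S → b ∈ S

/-- `S` is a union of at most `K` `r`-convex subsets of `X`. -/
def UnionOfAtMostConvex {X : Type*} (r : X → X → Prop) (K : ℕ) (S : Set X) : Prop :=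
  ∃ C : Fin K → Set X, (∀ i, IsRConvex r (C i)) ∧ S = ⋃ i, C i

/-- `φ(M; b̄)`, the set defined in `M` by the partitioned formula `φ(x; ȳ)` with
parameters `b̄`. -/
def realizeSet (L : Language) (M : Type*) [L.Structure M] {m : ℕ}
    (φ : L.Formula (Unit ⊕ Fin m)) (b : Fin m → M) : Set M :=
  {a : M | φ.Realize (Sum.elim (fun _ => a) b)}

/-- A family of subsets of `X` has independence dimension `≤ 1` with respect to `X`. -/
def IndepDimLEOne {X : Type*} (𝒜 : Set (Set X)) : Prop :=
  ∀ A ∈ 𝒜, ∀ B ∈ 𝒜, A ∩ B = ∅ ∨ A \ B = ∅ ∨ B \ A = ∅ ∨ (A ∪ B)ᶜ = ∅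

/-- Boolean combinations (in the free variables `(x; ȳ)` with `lg ȳ = m`) of formulas
from `Ψ`, where each formula `ψ(x; z̄) ∈ Ψ` may be instantiated by substituting
variables from `ȳ` for `z̄`. -/
inductive BoolCombOf {L : Language} (Ψ : Set ((k : ℕ) × L.Formula (Unit ⊕ Fin k)))
    (m : ℕ) : L.Formula (Unit ⊕ Fin m) → Prop
  | of (p : (k : ℕ) × L.Formula (Unit ⊕ Fin k)) (hp : p ∈ Ψ) (ρ : Fin p.1 → Fin m) :
      BoolCombOf Ψ m (p.2.relabel (Sum.map id ρ))
  | not {θ : L.Formula (Unit ⊕ Fin m)} : BoolCombOf Ψ m θ → BoolCombOf Ψ m θ.not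
  | and {θ₁ θ₂ : L.Formula (Unit ⊕ Fin m)} :
      BoolCombOf Ψ m θ₁ → BoolCombOf Ψ m θ₂ → BoolCombOf Ψ m (θ₁ ⊓ θ₂)
  | or {θ₁ θ₂ : L.Formula (Unit ⊕ Fin m)} :
      BoolCombOf Ψ m θ₁ → BoolCombOf Ψ m θ₂ → BoolCombOf Ψ m (θ₁ ⊔ θ₂)

/-- `T` is fully VC-minimal: there is a set `Ψ` of partitioned formulas `ψ(x; z̄)`
(`x` a single variable) whose instances have independence dimension `≤ 1` in every
model of `T`, and such that every partitioned formula `φ(x; ȳ)` is `T`-equivalent to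
a Boolean combination of formulas from `Ψ` in the free variables `(x; ȳ)`. -/
def FullyVCMinimal (L : Language) (T : L.Theory) : Prop :=
  ∃ Ψ : Set ((k : ℕ) × L.Formula (Unit ⊕ Fin k)),
    (∀ (M : Type w) [Nonempty M] [L.Structure M], M ⊨ T →
      IndepDimLEOne {S : Set M | ∃ p ∈ Ψ, ∃ b : Fin p.1 → M, S = realizeSet L M p.2 b}) ∧
    ∀ (m : ℕ) (φ : L.Formula (Unit ⊕ Fin m)),
      ∃ θ : L.Formula (Unit ⊕ Fin m), BoolCombOf Ψ m θ ∧
        ∀ (M : Type w) [Nonempty M] [L.Structure M], M ⊨ T →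
          ∀ v : Unit ⊕ Fin m → M, φ.Realize v ↔ θ.Realize v

/-- `T` is weakly o-minimal (with respect to the binary relation symbol `lt` of `L`):
in every model `M ⊨ T`, `lt` defines a linear order on `M` and every parametrically
definable subset of `M` is a finite union of `lt`-convex sets. -/
def WeaklyOMinimal (L : Language) (lt : L.Relations 2) (T : L.Theory) : Prop :=
  ∀ (M : Type w) [Nonempty M] [L.Structure M], M ⊨ T →
    IsStrictTotalOrder M (fun a b : M => Structure.RelMap lt ![a, b]) ∧
      ∀ (m : ℕ) (φ : L.Formula (Unit ⊕ Fin m)) (b : Fin m → M), ∃ K : ℕ,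
        UnionOfAtMostConvex (fun a b : M => Structure.RelMap lt ![a, b]) K
          (realizeSet L M φ b)

/-!
Take for `Ψ` the formulas `ψ(x; z̄)` defining an initial segment of `<` in every model:
initial segments of a linear order form a chain under inclusion, so their instances have
independence dimension `≤ 1`. For `S = φ(M; b̄)`, having an alternating chain
`x ≥ z₁ > ⋯ > zₙ` (`z₁ ∈ S`, `z₂ ∉ S`, …, or the same starting outside `S`) is a final
segment property of `x`, and `x ∈ S` exactly when the longest such chain starts in `S`.
A union of `K` convex sets has no alternating chain of length `2K + 1`; compactness makes
this bound uniform over the models of `T`, so `φ` is a finite Boolean combination of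
negated chain formulas.
-/

section AltChain

open Relation

variable {M : Type*} (r : M → M → Prop)

/-- `AltChain r n S x`: there are `x ≥ z₁ > z₂ > ⋯ > zₙ` with `z₁ ∈ S`, `z₂ ∉ S`, `z₃ ∈ S`, ….
All steps are written with the reflexive closure of `r`, but consecutive points lie on different
sides of `S`, so every step after the first one is strict. -/
def AltChain : ℕ → Set M → M → Prop
  | 0, _, _ => True
  | n + 1, S, x => ∃ z ∈ S, ReflGen r z x ∧ AltChain n Sᶜ z

def IsRLowerSet (S : Set M) : Prop :=
  ∀ ⦃a b : M⦄, r a b → b ∈ S → a ∈ S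

variable {r}

theorem AltChain.cons {n : ℕ} {S : Set M} {x : M} (hx : x ∈ S) (h : AltChain r n Sᶜ x) :
    AltChain r (n + 1) S x :=
  ⟨x, hx, ReflGen.refl, h⟩

theorem AltChain.of_succ {n : ℕ} {S : Set M} {x : M} (h : AltChain r (n + 1) S x) :
    AltChain r n S x := by
  induction n generalizing S x with
  | zero => trivial
  | succ n ih =>
    obtain ⟨z, hz, hzx, hchain⟩ := h
    exact ⟨z, hz, hzx, ih hchain⟩

theorem AltChain.of_rel [IsTrans M r] {n : ℕ} {S : Set M} {x y : M} (h : AltChain r n S x)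
    (hxy : r x y) : AltChain r n S y := by
  cases n with
  | zero => trivial
  | succ n =>
    obtain ⟨z, hz, hzx, hchain⟩ := h
    exact ⟨z, hz, _root_.trans hzx (ReflGen.single hxy), hchain⟩

theorem isRLowerSet_setOf_not_altChain [IsTrans M r] (n : ℕ) (S : Set M) :
    IsRLowerSet r {x | ¬AltChain r n S x} :=
  fun _ _ hab hb ha => hb (ha.of_rel hab)

theorem IsRLowerSet.subset_or_subset [Std.Trichotomous r] {A B : Set M} (hA : IsRLowerSet r A)
    (hB : IsRLowerSet r B) : A ⊆ B ∨ B ⊆ A := by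
  by_contra! h
  obtain ⟨a, haA, haB⟩ := Set.not_subset.1 h.1
  obtain ⟨b, hbB, hbA⟩ := Set.not_subset.1 h.2
  rcases trichotomous_of r a b with hab | rfl | hba
  · exact haB (hB hab hbB)
  · exact haB hbB
  · exact hbA (hA hba haA)

/-- Between two `S`-points of an alternating chain the chain leaves `S`, so by convexity these
two points lie in different pieces `C i`. -/
theorem not_altChain_of_forall_mem_iff_convex [IsTrans M r] {K : ℕ} {C : Fin K → Set M}
    (hC : ∀ i, IsRConvex r (C i)) {S : Set M} {x : M}
    (hS : ∀ w, ReflGen r w x → (w ∈ S ↔ ∃ i, w ∈ C i)) : ¬AltChain r (2 * K + 1) S x := by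
  induction K generalizing x with
  | zero =>
    rintro ⟨z, hzS, hzx, -⟩
    obtain ⟨i, -⟩ := (hS z hzx).1 hzS
    exact i.elim0
  | succ K ih =>
    rintro ⟨z₁, hz₁S, hz₁x, z₂, hz₂S, hz₂z₁, hchain⟩
    rw [compl_compl S] at hchain
    obtain ⟨i, hz₁i⟩ := (hS z₁ hz₁x).1 hz₁S
    have hz₂x : ReflGen r z₂ x := _root_.trans hz₂z₁ hz₁x
    refine ih (fun j => hC (i.succAbove j)) (fun w hw => ⟨fun hwS => ?_, ?_⟩) hchain
    · have hwx := _root_.trans hw hz₂x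
      obtain ⟨k, hwk⟩ := (hS w hwx).1 hwS
      obtain rfl | ⟨j, rfl⟩ := Fin.eq_self_or_eq_succAbove i k
      · have hwz₂ : r w z₂ := by
          rcases hw with _ | hw
          exacts [absurd hwS hz₂S, hw]
        have hz₂z₁' : r z₂ z₁ := by
          rcases hz₂z₁ with _ | hz₂z₁
          exacts [absurd hz₁S hz₂S, hz₂z₁]
        exact absurd ((hS z₂ hz₂x).2 ⟨_, hC _ w z₂ z₁ hwz₂ hz₂z₁' hwk hz₁i⟩) hz₂S
      · exact ⟨j, hwk⟩
    · rintro ⟨j, hwj⟩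
      exact (hS w (_root_.trans hw hz₂x)).2 ⟨_, hwj⟩

theorem UnionOfAtMostConvex.not_altChain [IsTrans M r] {K : ℕ} {S : Set M}
    (hS : UnionOfAtMostConvex r K S) (x : M) : ¬AltChain r (2 * K + 1) S x := by
  obtain ⟨C, hC, rfl⟩ := hS
  exact not_altChain_of_forall_mem_iff_convex hC fun w _ => Set.mem_iUnion

/-- The longest alternating chain below a point starts on the same side of `S` as the point. -/
theorem notMem_iff_exists_altChain {N : ℕ} {S : Set M} (hN : ∀ x, ¬AltChain r (N + 1) S x)
    (x : M) : x ∉ S ↔ ∃ n ≤ N, AltChain r (n + 1) Sᶜ x ∧ ¬AltChain r (n + 1) S x := by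
  constructor
  · intro hx
    suffices ∀ k, ¬AltChain r (k + 1) S x →
        ∃ n ≤ k, AltChain r (n + 1) Sᶜ x ∧ ¬AltChain r (n + 1) S x from this N (hN x)
    intro k hk
    induction k with
    | zero => exact ⟨0, le_rfl, AltChain.cons hx trivial, hk⟩
    | succ k ih =>
      by_cases hshort : AltChain r (k + 1) S x
      · exact ⟨k + 1, le_rfl, AltChain.cons hx ((compl_compl S).symm ▸ hshort), hk⟩
      · obtain ⟨n, hn, hchain⟩ := ih hshort
        exact ⟨n, hn.trans k.le_succ, hchain⟩
  · rintro ⟨n, -, hcompl, hS⟩ hx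
    exact hS (AltChain.cons hx hcompl).of_succ

theorem indepDimLEOne_of_isChain {X : Type*} {𝒜 : Set (Set X)} (h𝒜 : IsChain (· ⊆ ·) 𝒜) :
    IndepDimLEOne 𝒜 := by
  intro A hA B hB
  rcases eq_or_ne A B with rfl | hAB
  · exact Or.inr (Or.inl Set.sdiff_self)
  rcases h𝒜 hA hB hAB with h | h
  · exact Or.inr (Or.inl (Set.sdiff_eq_empty.2 h))
  · exact Or.inr (Or.inr (Or.inl (Set.sdiff_eq_empty.2 h)))

end AltChain

section Formulas

open Relation

variable {L : Language} {m : ℕ}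

/-- In `ψ.relabel (toBoundVar m)` the distinguished variable `x` of `ψ(x; ȳ)` becomes the
variable bound by `Formula.iExs Unit`, while the parameters `ȳ` stay free. -/
def toBoundVar (m : ℕ) : Unit ⊕ Fin m → (Unit ⊕ Fin m) ⊕ Unit :=
  Sum.elim (fun _ => Sum.inr ()) (Sum.inl ∘ Sum.inr)

noncomputable def altChainFormula (lt : L.Relations 2) :
    ℕ → L.Formula (Unit ⊕ Fin m) → L.Formula (Unit ⊕ Fin m)
  | 0, _ => ⊤
  | n + 1, ψ => Formula.iExs Unit
      ((Term.equal (var (Sum.inl (Sum.inl ()))) (var (Sum.inr ())) ⊔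
          lt.formula₂ (var (Sum.inr ())) (var (Sum.inl (Sum.inl ())))) ⊓
        ψ.relabel (toBoundVar m) ⊓ (altChainFormula lt n ψ.not).relabel (toBoundVar m))

variable {M : Type*} [L.Structure M]

theorem realizeSet_not (ψ : L.Formula (Unit ⊕ Fin m)) (b : Fin m → M) :
    realizeSet L M ψ.not b = (realizeSet L M ψ b)ᶜ :=
  rfl

theorem realize_altChainFormula (lt : L.Relations 2) (n : ℕ) (ψ : L.Formula (Unit ⊕ Fin m))
    (v : Unit ⊕ Fin m → M) :
    (altChainFormula lt n ψ).Realize v ↔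
      AltChain (fun a b : M => Structure.RelMap lt ![a, b]) n (realizeSet L M ψ (v ∘ Sum.inr))
        (v (Sum.inl ())) := by
  induction n generalizing ψ v with
  | zero => simp [altChainFormula, AltChain]
  | succ n ih =>
    have hshift (z : Unit → M) : Sum.elim v z ∘ toBoundVar m =
        Sum.elim (fun _ => z ()) (v ∘ Sum.inr) := by
      ext (_ | _) <;> rfl
    simp only [altChainFormula, AltChain, Formula.realize_iExs, Formula.realize_inf,
      Formula.realize_sup, Formula.realize_equal, Formula.realize_rel₂, Formula.realize_relabel,
      Term.realize_var, Sum.elim_inl, Sum.elim_comp_inr, hshift, ih, reflGen_iff,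
      ← realizeSet_not]
    exact ⟨fun ⟨z, ⟨hzx, hz⟩, hchain⟩ => ⟨z (), hz, hzx, hchain⟩,
      fun ⟨z, hz, hzx, hchain⟩ => ⟨fun _ => z, ⟨hzx, hz⟩, hchain⟩⟩

end Formulas

/-- An ultraproduct of counterexamples would realize every `F n`. -/
theorem FirstOrder.Language.Theory.exists_forall_not_realize_of_antitone {L : Language} {α : Type*} (T : L.Theory)
    (F : ℕ → L.Formula α)
    (hanti : ∀ (M : Type w) [Nonempty M] [L.Structure M], M ⊨ T →
      ∀ (n : ℕ) (v : α → M), (F (n + 1)).Realize v → (F n).Realize v)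
    (hfin : ∀ (M : Type w) [Nonempty M] [L.Structure M], M ⊨ T →
      ∀ v : α → M, ∃ n, ¬(F n).Realize v) :
    ∃ N, ∀ (M : Type w) [Nonempty M] [L.Structure M], M ⊨ T →
      ∀ v : α → M, ¬(F N).Realize v := by
  have hdown : ∀ (M : Type w) [Nonempty M] [L.Structure M], M ⊨ T → ∀ (v : α → M) {n K : ℕ},
      n ≤ K → (F K).Realize v → (F n).Realize v := by
    intro M _ _ hM v n K hnK hK
    induction K, hnK using Nat.le_induction with
    | base => exact hK
    | succ K _ ih => exact ih (hanti M hM K v hK)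
  by_contra! h
  choose M hne hstr hM v hv using h
  let U := (Filter.hyperfilter ℕ : Filter ℕ).Product M
  have hU : U ⊨ T := (Theory.model_iff T).2 fun σ hσ =>
    (Ultraproduct.sentence_realize σ).2 (.of_forall fun K => (Theory.model_iff T).1 (hM K) σ hσ)
  obtain ⟨n, hn⟩ := hfin U hU fun a => (fun K => v K a : (K : ℕ) → M K)
  refine hn ((Ultraproduct.realize_formula_cast (F n) _).2 ?_)
  filter_upwards [Nat.hyperfilter_le_atTop (Filter.eventually_ge_atTop n)] with K hK
  exact hdown _ (hM K) _ hK (hv K)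

section BooleanCombinations

variable {L : Language} {α : Type*}

def FirstOrder.Language.Formula.supUpTo (D : ℕ → L.Formula α) : ℕ → L.Formula α
  | 0 => D 0
  | N + 1 => Formula.supUpTo D N ⊔ D (N + 1)

theorem FirstOrder.Language.Formula.realize_supUpTo {M : Type*} [L.Structure M] (D : ℕ → L.Formula α) (N : ℕ)
    (v : α → M) : (Formula.supUpTo D N).Realize v ↔ ∃ n ≤ N, (D n).Realize v := by
  induction N with
  | zero => simp [Formula.supUpTo]
  | succ N ih =>
    simp only [Formula.supUpTo, Formula.realize_sup, ih, Nat.le_succ_iff_eq_or_le]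
    grind

variable {Ψ : Set ((k : ℕ) × L.Formula (Unit ⊕ Fin k))} {m : ℕ}

theorem BoolCombOf.of_mem {ψ : L.Formula (Unit ⊕ Fin m)} (hψ : ⟨m, ψ⟩ ∈ Ψ) :
    BoolCombOf Ψ m ψ := by
  simpa [Formula.relabel] using BoolCombOf.of _ hψ id

theorem BoolCombOf.supUpTo {D : ℕ → L.Formula (Unit ⊕ Fin m)} (hD : ∀ n, BoolCombOf Ψ m (D n))
    (N : ℕ) : BoolCombOf Ψ m (Formula.supUpTo D N) := by
  induction N with
  | zero => exact hD 0
  | succ N ih => exact ih.or (hD (N + 1))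

end BooleanCombinations

theorem mem_realizeSet_iff {L : Language} {M : Type*} [L.Structure M] {m : ℕ}
    (φ : L.Formula (Unit ⊕ Fin m)) (v : Unit ⊕ Fin m → M) :
    v (Sum.inl ()) ∈ realizeSet L M φ (v ∘ Sum.inr) ↔ φ.Realize v := by
  rw [← Sum.elim_comp_inl_inr v]
  rfl

def lowerSetFormulas {L : Language} (lt : L.Relations 2) (T : L.Theory) :
    Set ((k : ℕ) × L.Formula (Unit ⊕ Fin k)) :=
  {p | ∀ (M : Type w) [Nonempty M] [L.Structure M], M ⊨ T → ∀ b : Fin p.1 → M,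
    IsRLowerSet (fun a b : M => Structure.RelMap lt ![a, b]) (realizeSet L M p.2 b)}

namespace WeaklyOMinimal

variable {L : Language} {lt : L.Relations 2} {T : L.Theory}

theorem indepDimLEOne_lowerSetFormulas (hwo : WeaklyOMinimal.{w} L lt T) (M : Type w)
    [Nonempty M] [L.Structure M] (hM : M ⊨ T) :
    IndepDimLEOne {S : Set M | ∃ p ∈ lowerSetFormulas.{w} lt T, ∃ b : Fin p.1 → M,
      S = realizeSet L M p.2 b} := by
  have := (hwo M hM).1
  refine indepDimLEOne_of_isChain ?_
  rintro _ ⟨p, hp, b, rfl⟩ _ ⟨q, hq, c, rfl⟩ -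
  exact (hp M hM b).subset_or_subset (hq M hM c)

theorem not_altChainFormula_mem_lowerSetFormulas (hwo : WeaklyOMinimal.{w} L lt T) {m : ℕ}
    (n : ℕ) (ψ : L.Formula (Unit ⊕ Fin m)) :
    ⟨m, (altChainFormula lt n ψ).not⟩ ∈ lowerSetFormulas.{w} lt T := by
  intro M _ _ hM b
  have := (hwo M hM).1
  simpa only [realizeSet, Formula.realize_not, realize_altChainFormula,
    Sum.elim_comp_inr, Sum.elim_inl] using isRLowerSet_setOf_not_altChain n (realizeSet L M ψ b)

theorem exists_forall_not_realize_altChainFormula (hwo : WeaklyOMinimal.{w} L lt T) {m : ℕ}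
    (φ : L.Formula (Unit ⊕ Fin m)) :
    ∃ N, ∀ (M : Type w) [Nonempty M] [L.Structure M], M ⊨ T →
      ∀ v : Unit ⊕ Fin m → M, ¬(altChainFormula lt N φ).Realize v := by
  refine T.exists_forall_not_realize_of_antitone _ (fun M _ _ _ n v => ?_)
    (fun M _ _ hM v => ?_)
  · simpa only [realize_altChainFormula] using AltChain.of_succ
  · have := (hwo M hM).1
    obtain ⟨K, hK⟩ := (hwo M hM).2 m φ (v ∘ Sum.inr)
    exact ⟨2 * K + 1, by simpa only [realize_altChainFormula] using hK.not_altChain _⟩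

end WeaklyOMinimal

theorem stmt_17_general {L : Language} (lt : L.Relations 2) (T : L.Theory)
    (hwo : WeaklyOMinimal.{w} L lt T) : FullyVCMinimal.{w} L T := by
  refine ⟨lowerSetFormulas lt T, hwo.indepDimLEOne_lowerSetFormulas, fun m φ => ?_⟩
  obtain ⟨N, hN⟩ := hwo.exists_forall_not_realize_altChainFormula φ
  let D n := (altChainFormula lt (n + 1) φ.not).not.not ⊓ (altChainFormula lt (n + 1) φ).not
  refine ⟨(Formula.supUpTo D N).not, .not (.supUpTo (fun n => .and
    (.not (.of_mem (hwo.not_altChainFormula_mem_lowerSetFormulas _ _)))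
    (.of_mem (hwo.not_altChainFormula_mem_lowerSetFormulas _ _))) N), fun M _ _ hM v => ?_⟩
  have hbound : ∀ x, ¬AltChain (fun a b : M => Structure.RelMap lt ![a, b]) (N + 1)
      (realizeSet L M φ (v ∘ Sum.inr)) x := fun x hx =>
    hN M hM (Sum.elim (fun _ => x) (v ∘ Sum.inr))
      (by simpa [realize_altChainFormula] using hx.of_succ)
  rw [← mem_realizeSet_iff, ← not_iff_not, notMem_iff_exists_altChain hbound]
  simp [D, Formula.realize_supUpTo, realize_altChainFormula, realizeSet_not]

theorem stmt_17 {L : Language} (lt : L.Relations 2) (T : L.Theory)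
    (hcomp : T.IsComplete) (hsat : T.IsSatisfiable)
    (hwo : WeaklyOMinimal.{w} L lt T) : FullyVCMinimal.{w} L T :=
  stmt_17_general lt T hwo
end

section
/- Let T be a complete satisfiable L-theory. Suppose there exists a set Ψ of partitioned L-formulas ψ(x; ȳ) (each with x a single free variable) such that: (i) for every model M ⊨ T, the family {ψ(M; b̄) : ψ(x; ȳ) ∈ Ψ, b̄ ∈ M^{lg(ȳ)}} of subsets of M has independence dimension ≤ 1 with respect to M; and (ii)' for every partitioned L-formula φ(x; ȳ), every model M ⊨ T, and every b̄ ∈ M^{lg(ȳ)}, there exist formulas ψ_0(x; ȳ), …, ψ_{n−1}(x; ȳ) ∈ Ψ (with parameter variables of length lg(ȳ)) such that φ(M; b̄) lies in the Boolean algebra of subsets of M generated by {ψ_0(M; b̄), …, ψ_{n−1}(M; b̄)}. Then T is fully VC-minimal, i.e., there exists a set Ψ' of partitioned L-formulas satisfying (i) and such that every partitioned L-formula φ(x; ȳ) is T-equivalent to a Boolean combination of formulas from Ψ' whose free variables are among (x; ȳ). -/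
open FirstOrder Language

universe w

/-- The Boolean algebra of subsets of `X` generated by a family `G`. -/
inductive GenBoolAlg {X : Type*} (G : Set (Set X)) : Set X → Prop
  | base {A : Set X} : A ∈ G → GenBoolAlg G A
  | compl {A : Set X} : GenBoolAlg G A → GenBoolAlg G Aᶜ
  | union {A B : Set X} : GenBoolAlg G A → GenBoolAlg G B → GenBoolAlg G (A ∪ B)
  | inter {A B : Set X} : GenBoolAlg G A → GenBoolAlg G B → GenBoolAlg G (A ∩ B)

/-!
Enlarge `Ψ` by all formulas in which `x` does not occur: their instances are `∅` or `M`, so the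
independence dimension stays `≤ 1`. Fix `φ(x; ȳ)`. By (ii)', every parameter `b̄` in every model
satisfies `∀ x (φ ↔ θ)` for some Boolean combination `θ` of `Ψ`; by compactness (an ultrapower of
one model) finitely many `θ₁, …, θₙ` suffice there, and by completeness of `T` in every model.
Then `φ` is `T`-equivalent to `⋁ᵢ (∀ x (φ ↔ θᵢ) ∧ θᵢ)`, a Boolean combination of the enlarged set.
-/

namespace FirstOrder.Language

universe u

variable {L : Language}

theorem Formula.relabel_id {α : Type*} (φ : L.Formula α) : φ.relabel id = φ := by
  simp [Formula.relabel, BoundedFormula.relabel_sumInl, BoundedFormula.castLE_rfl]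

theorem exists_finset_forall_exists_realize_of_model_completeTheory {M : Type w} [Nonempty M]
    [L.Structure M] {α : Type u} {J : Type*} (χ : J → L.Formula α)
    (h : ∀ (N : Type (max u w)) [Nonempty N] [L.Structure N], N ⊨ L.completeTheory M →
      ∀ b : α → N, ∃ j, (χ j).Realize b) :
    ∃ F : Finset J, ∀ b : α → M, ∃ j ∈ F, (χ j).Realize b := by
  classical
  by_contra! hF
  let D : J → Set (α → M) := fun j => {b | (χ j).Realize b}
  -- Index by finite sets of the definable sets `D j` rather than by `Finset J`: these live in the
  -- universe of `M`, so the ultrapower below is a legal `N`.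
  have hmiss : ∀ G : Finset (Set.range D), ∃ b : α → M, ∀ S ∈ G, b ∉ (S : Set (α → M)) := by
    intro G
    obtain ⟨b, hb⟩ := hF (G.image fun S => S.2.choose)
    refine ⟨b, fun S hS hbS => hb _ (Finset.mem_image_of_mem _ hS) ?_⟩
    rwa [← S.2.choose_spec] at hbS
  choose b hb using hmiss
  let u : Ultrafilter (Finset (Set.range D)) := .of Filter.atTop
  have hN : ((u : Filter (Finset (Set.range D))).Product fun _ => M) ⊨ L.completeTheory M :=
    (Theory.model_iff _).2 fun σ hσ => (Ultraproduct.sentence_realize σ).2 (.of_forall fun _ => hσ)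
  let x : α → Finset (Set.range D) → M := fun i G => b G i
  obtain ⟨j, hj⟩ := h _ hN fun i => (x i : (u : Filter (Finset (Set.range D))).Product fun _ => M)
  replace hj := (Ultraproduct.realize_formula_cast (χ j) x).1 hj
  have hmem : ∀ᶠ G in (u : Filter (Finset (Set.range D))), ⟨D j, j, rfl⟩ ∈ G :=
    Ultrafilter.of_le _ (Filter.eventually_ge_atTop {⟨D j, j, rfl⟩} |>.mono
      fun G hG => Finset.singleton_subset_iff.1 hG)
  obtain ⟨G, hG, hjG⟩ := (hj.and hmem).exists
  exact hb G _ hjG hG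

theorem Theory.IsComplete.forall_realize_iff {T : L.Theory} (hT : T.IsComplete) {β : Type*}
    [Finite β] (φ : L.Formula β) (M N : Type*) [L.Structure M] [L.Structure N] [Nonempty M]
    [Nonempty N] [M ⊨ T] [N ⊨ T] :
    (∀ b : β → M, φ.Realize b) ↔ ∀ b : β → N, φ.Realize b := by
  let σ : L.Sentence := (φ.relabel Sum.inr).iAlls β
  have hM : M ⊨ σ ↔ ∀ b : β → M, φ.Realize b := by simp [σ, Sentence.Realize]
  have hN : N ⊨ σ ↔ ∀ b : β → N, φ.Realize b := by simp [σ, Sentence.Realize]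
  rw [← hM, ← hN, hT.realize_sentence_iff, hT.realize_sentence_iff]

end FirstOrder.Language

theorem IndepDimLEOne.of_subset_union_trivial {X : Type*} {𝒜 ℬ : Set (Set X)}
    (hℬ : IndepDimLEOne ℬ) (h𝒜 : 𝒜 ⊆ ℬ ∪ {∅, Set.univ}) : IndepDimLEOne 𝒜 := by
  intro A hA B hB
  rcases h𝒜 hA with hA | rfl | rfl <;> rcases h𝒜 hB with hB | rfl | rfl
  · exact hℬ A hA B hB
  all_goals simp

variable {L : Language}

def paramFormulas (L : Language) : Set ((k : ℕ) × L.Formula (Unit ⊕ Fin k)) :=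
  {p | ∃ σ : L.Formula (Fin p.1), p.2 = σ.relabel Sum.inr}

theorem realizeSet_relabel_inr {M : Type*} [L.Structure M] {m : ℕ} (σ : L.Formula (Fin m))
    (b : Fin m → M) : realizeSet L M (σ.relabel Sum.inr) b = {_a | σ.Realize b} := by
  ext a
  simp [realizeSet]

theorem realizeSet_mem_empty_univ_of_mem_paramFormulas {M : Type*} [L.Structure M]
    {p : (k : ℕ) × L.Formula (Unit ⊕ Fin k)} (hp : p ∈ paramFormulas L) (b : Fin p.1 → M) :
    realizeSet L M p.2 b ∈ ({∅, Set.univ} : Set (Set M)) := by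
  obtain ⟨σ, hσ⟩ := hp
  rw [hσ, realizeSet_relabel_inr]
  by_cases hb : σ.Realize b <;> simp [hb]

theorem indepDimLEOne_union_paramFormulas {M : Type*} [L.Structure M]
    {Ψ : Set ((k : ℕ) × L.Formula (Unit ⊕ Fin k))}
    (hΨ : IndepDimLEOne {S : Set M | ∃ p ∈ Ψ, ∃ b : Fin p.1 → M, S = realizeSet L M p.2 b}) :
    IndepDimLEOne
      {S : Set M | ∃ p ∈ Ψ ∪ paramFormulas L, ∃ b : Fin p.1 → M, S = realizeSet L M p.2 b} := by
  refine hΨ.of_subset_union_trivial ?_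
  rintro _ ⟨p, hp | hp, b, rfl⟩
  · exact Or.inl ⟨p, hp, b, rfl⟩
  · exact Or.inr (realizeSet_mem_empty_univ_of_mem_paramFormulas hp b)

namespace BoolCombOf

variable {Ψ : Set ((k : ℕ) × L.Formula (Unit ⊕ Fin k))} {m : ℕ}

theorem mono {Ψ' : Set ((k : ℕ) × L.Formula (Unit ⊕ Fin k))} (h : Ψ ⊆ Ψ')
    {θ : L.Formula (Unit ⊕ Fin m)} (hθ : BoolCombOf Ψ m θ) : BoolCombOf Ψ' m θ := by
  induction hθ with
  | of p hp ρ => exact .of p (h hp) ρ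
  | not _ ih => exact .not ih
  | and _ _ ih₁ ih₂ => exact .and ih₁ ih₂
  | or _ _ ih₁ ih₂ => exact .or ih₁ ih₂

theorem of_mem_s18 {ψ : L.Formula (Unit ⊕ Fin m)} (hψ : ⟨m, ψ⟩ ∈ Ψ) : BoolCombOf Ψ m ψ := by
  simpa [Sum.map_id_id, Formula.relabel_id] using BoolCombOf.of ⟨m, ψ⟩ hψ id

theorem relabel_inr (h : paramFormulas L ⊆ Ψ) (σ : L.Formula (Fin m)) :
    BoolCombOf Ψ m (σ.relabel Sum.inr) :=
  of_mem_s18 (h ⟨σ, rfl⟩)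

theorem bot (h : paramFormulas L ⊆ Ψ) : BoolCombOf Ψ m ⊥ :=
  relabel_inr h ⊥

theorem iSup {β : Type*} [Finite β] (h : paramFormulas L ⊆ Ψ)
    {f : β → L.Formula (Unit ⊕ Fin m)} (hf : ∀ i, BoolCombOf Ψ m (f i)) :
    BoolCombOf Ψ m (Formula.iSup f) := by
  let _ := Fintype.ofFinite β
  show BoolCombOf Ψ m (((Finset.univ : Finset β).toList.map f).foldr (· ⊔ ·) ⊥)
  induction (Finset.univ : Finset β).toList with
  | nil => exact bot h
  | cons i l ih => exact .or (hf i) ih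

end BoolCombOf

theorem GenBoolAlg.exists_boolCombOf {M : Type*} [L.Structure M]
    {Ψ : Set ((k : ℕ) × L.Formula (Unit ⊕ Fin k))} {m : ℕ} {b : Fin m → M} {X : Set M}
    (h : GenBoolAlg {S : Set M | ∃ ψ : L.Formula (Unit ⊕ Fin m),
        (⟨m, ψ⟩ : (k : ℕ) × L.Formula (Unit ⊕ Fin k)) ∈ Ψ ∧ S = realizeSet L M ψ b} X) :
    ∃ θ, BoolCombOf Ψ m θ ∧ X = realizeSet L M θ b := by
  induction h with
  | base hA =>
    obtain ⟨ψ, hψ, rfl⟩ := hA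
    exact ⟨ψ, .of_mem hψ, rfl⟩
  | compl _ ih =>
    obtain ⟨θ, hθ, rfl⟩ := ih
    exact ⟨θ.not, .not hθ, by ext; simp [realizeSet]⟩
  | union _ _ ih₁ ih₂ =>
    obtain ⟨θ₁, hθ₁, rfl⟩ := ih₁
    obtain ⟨θ₂, hθ₂, rfl⟩ := ih₂
    exact ⟨θ₁ ⊔ θ₂, .or hθ₁ hθ₂, by ext; simp [realizeSet]⟩
  | inter _ _ ih₁ ih₂ =>
    obtain ⟨θ₁, hθ₁, rfl⟩ := ih₁
    obtain ⟨θ₂, hθ₂, rfl⟩ := ih₂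
    exact ⟨θ₁ ⊓ θ₂, .and hθ₁ hθ₂, by ext; simp [realizeSet]⟩

noncomputable def agreeFormula {m : ℕ} (φ θ : L.Formula (Unit ⊕ Fin m)) : L.Formula (Fin m) :=
  ((φ.iff θ).relabel Sum.swap).iAlls Unit

theorem realize_agreeFormula {M : Type*} [L.Structure M] {m : ℕ}
    (φ θ : L.Formula (Unit ⊕ Fin m)) (b : Fin m → M) :
    (agreeFormula φ θ).Realize b ↔ realizeSet L M φ b = realizeSet L M θ b := by
  simp only [agreeFormula, Formula.realize_iAlls, Formula.realize_relabel, Sum.elim_swap,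
    Formula.realize_iff, Set.ext_iff, realizeSet, Set.mem_ofPred_eq]
  exact ⟨fun h a => h fun _ => a, fun h a => h (a ())⟩

theorem realize_iff_of_realizeSet_eq {M : Type*} [L.Structure M] {m : ℕ}
    {φ θ : L.Formula (Unit ⊕ Fin m)} {v : Unit ⊕ Fin m → M}
    (h : realizeSet L M φ (v ∘ Sum.inr) = realizeSet L M θ (v ∘ Sum.inr)) :
    φ.Realize v ↔ θ.Realize v := by
  have hv : Sum.elim (fun _ => v (Sum.inl ())) (v ∘ Sum.inr) = v := by
    ext (⟨⟩ | _) <;> rfl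
  have := Set.ext_iff.1 h (v (Sum.inl ()))
  rwa [realizeSet, realizeSet, Set.mem_ofPred_eq, Set.mem_ofPred_eq, hv] at this

theorem exists_boolCombOf_forall_realize_iff {T : L.Theory} (hT : T.IsComplete)
    {Ψ : Set ((k : ℕ) × L.Formula (Unit ⊕ Fin k))} {m : ℕ} (φ : L.Formula (Unit ⊕ Fin m))
    (hφ : ∀ (M : Type w) [Nonempty M] [L.Structure M], M ⊨ T → ∀ b : Fin m → M,
      ∃ θ, BoolCombOf Ψ m θ ∧ realizeSet L M φ b = realizeSet L M θ b)
    (M₀ : Type w) [Nonempty M₀] [L.Structure M₀] [M₀ ⊨ T] :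
    ∃ θ, BoolCombOf (Ψ ∪ paramFormulas L) m θ ∧
      ∀ (M : Type w) [Nonempty M] [L.Structure M], M ⊨ T →
        ∀ v : Unit ⊕ Fin m → M, φ.Realize v ↔ θ.Realize v := by
  obtain ⟨F, hF⟩ := exists_finset_forall_exists_realize_of_model_completeTheory (M := M₀)
    (fun θ : {θ // BoolCombOf Ψ m θ} => agreeFormula φ θ.1) fun N _ _ hN b => by
      obtain ⟨θ, hθ, h⟩ := hφ N (hN.mono Theory.completeTheory.subset) b
      exact ⟨⟨θ, hθ⟩, (realize_agreeFormula φ θ b).2 h⟩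
  have hcover : ∀ (M : Type w) [Nonempty M] [L.Structure M], M ⊨ T → ∀ b : Fin m → M,
      ∃ θ ∈ F, realizeSet L M φ b = realizeSet L M θ.1 b := by
    intro M _ _ hM b
    have := (hT.forall_realize_iff (Formula.iSup fun θ : F => agreeFormula φ θ.1.1) M₀ M).1
      (fun b => by simpa using hF b) b
    simpa [realize_agreeFormula] using this
  refine ⟨Formula.iSup fun θ : F => (agreeFormula φ θ.1.1).relabel Sum.inr ⊓ θ.1.1,
    BoolCombOf.iSup Set.subset_union_right fun θ =>
      .and (.relabel_inr Set.subset_union_right _) (θ.1.2.mono Set.subset_union_left), ?_⟩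
  intro M _ _ hM v
  simp only [Formula.realize_iSup, Formula.realize_inf, Formula.realize_relabel,
    realize_agreeFormula]
  constructor
  · intro h
    obtain ⟨θ, hθF, hθ⟩ := hcover M hM (v ∘ Sum.inr)
    exact ⟨⟨θ, hθF⟩, hθ, (realize_iff_of_realizeSet_eq hθ).1 h⟩
  · rintro ⟨θ, hθ, h⟩
    exact (realize_iff_of_realizeSet_eq hθ).2 h

theorem stmt_18_general {L : Language} (T : L.Theory) (hcomp : T.IsComplete)
    (Ψ : Set ((k : ℕ) × L.Formula (Unit ⊕ Fin k)))
    (hi : ∀ (M : Type w) [Nonempty M] [L.Structure M], M ⊨ T →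
      IndepDimLEOne {S : Set M | ∃ p ∈ Ψ, ∃ b : Fin p.1 → M, S = realizeSet L M p.2 b})
    (hii' : ∀ (m : ℕ) (φ : L.Formula (Unit ⊕ Fin m))
      (M : Type w) [Nonempty M] [L.Structure M], M ⊨ T → ∀ b : Fin m → M,
        GenBoolAlg {S : Set M | ∃ ψ : L.Formula (Unit ⊕ Fin m),
            (⟨m, ψ⟩ : (k : ℕ) × L.Formula (Unit ⊕ Fin k)) ∈ Ψ ∧ S = realizeSet L M ψ b}
          (realizeSet L M φ b)) :
    FullyVCMinimal.{w} L T := by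
  refine ⟨Ψ ∪ paramFormulas L, fun M _ _ hM => indepDimLEOne_union_paramFormulas (hi M hM),
    fun m φ => ?_⟩
  by_cases hmodel : ∃ (M : Type w) (_ : Nonempty M) (_ : L.Structure M), M ⊨ T
  · obtain ⟨M₀, _, _, _⟩ := hmodel
    exact exists_boolCombOf_forall_realize_iff hcomp φ
      (fun M _ _ hM b => (hii' m φ M hM b).exists_boolCombOf) M₀
  · exact ⟨⊥, .bot Set.subset_union_right, fun M _ _ hM => (hmodel ⟨M, ‹_›, ‹_›, hM⟩).elim⟩

theorem stmt_18 {L : Language} (T : L.Theory) (hcomp : T.IsComplete)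
    (hsat : T.IsSatisfiable)
    (Ψ : Set ((k : ℕ) × L.Formula (Unit ⊕ Fin k)))
    (hi : ∀ (M : Type w) [Nonempty M] [L.Structure M], M ⊨ T →
      IndepDimLEOne {S : Set M | ∃ p ∈ Ψ, ∃ b : Fin p.1 → M, S = realizeSet L M p.2 b})
    (hii' : ∀ (m : ℕ) (φ : L.Formula (Unit ⊕ Fin m))
      (M : Type w) [Nonempty M] [L.Structure M], M ⊨ T → ∀ b : Fin m → M,
        GenBoolAlg {S : Set M | ∃ ψ : L.Formula (Unit ⊕ Fin m),
            (⟨m, ψ⟩ : (k : ℕ) × L.Formula (Unit ⊕ Fin k)) ∈ Ψ ∧ S = realizeSet L M ψ b}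
          (realizeSet L M φ b)) :
    FullyVCMinimal.{w} L T :=
  stmt_18_general T hcomp Ψ hi hii'
end

section
/- In the theory ACF₀ of algebraically closed fields of characteristic 0 (in the language of rings), the partitioned formula φ(x; y_0, y_1) given by x² + y_0·x + y_1 = 0 does not have UDTFS rank ≤ 1 over ACF₀. -/
open FirstOrder Language

universe w

/-- `φ(x̄; ȳ)` has UDTFS rank `≤ n` over `T`: there are finitely many formulas
`ψ_ℓ(ȳ; z̄₀, …, z̄_{n-1})` such that, in any model of `T`, every `φ`-type of a tuple
over a finite nonempty parameter set `B` is defined by some `ψ_ℓ(ȳ; c̄₀, …, c̄_{n-1})`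
with the `c̄_j` drawn from `B`. -/
def UDTFSRankLE (L : Language) (T : L.Theory) {α : Type} {q : ℕ}
    (φ : L.Formula (α ⊕ Fin q)) (n : ℕ) : Prop :=
  ∃ (L₀ : ℕ) (ψ : Fin L₀ → L.Formula (Fin q ⊕ (Fin n × Fin q))),
    ∀ (M : Type w) [Nonempty M] [L.Structure M], M ⊨ T →
      ∀ B : Finset (Fin q → M), B.Nonempty → ∀ a : α → M,
        ∃ (ℓ : Fin L₀) (c : Fin n → Fin q → M), (∀ j, c j ∈ B) ∧
          ∀ b ∈ B, ((ψ ℓ).Realize (Sum.elim b fun jk : Fin n × Fin q => c jk.1 jk.2) ↔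
            φ.Realize (Sum.elim a b))

/-- The partitioned ring formula `φ(x; y₀, y₁)` expressing `x² + y₀·x + y₁ = 0`. -/
def quadFormula : Language.ring.Formula (Unit ⊕ Fin 2) :=
  letI x : Language.ring.Term (Unit ⊕ Fin 2) := Term.var (Sum.inl ())
  letI y₀ : Language.ring.Term (Unit ⊕ Fin 2) := Term.var (Sum.inr 0)
  letI y₁ : Language.ring.Term (Unit ⊕ Fin 2) := Term.var (Sum.inr 1)
  Term.equal (x * x + y₀ * x + y₁) 0

/-!
Work in the algebraic closure `M` of `ℚ(t₀, t₁, t₂, t₃)` and let `B` be the set of coefficient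
vectors of the polynomials `(X - tᵢ)(X - tⱼ)`, `i ≠ j`; the `φ`-type of `t₀` over `B` consists of
the pairs with `0 ∈ {i, j}`. A formula `ψ(y; c)` whose parameter `c ∈ B` comes from the
pair `{u, v}` is preserved by every automorphism of `M` fixing `c`. For a suitable `s ≠ 0` the
automorphism swapping `t₀` and `tₛ` fixes `c`, and it moves the pair `{0, w}` (which is in the
type) to `{s, w}` (which is not) for any `w ∉ {0, s}`; so `ψ(y; c)` cannot define the type.
-/

open Function

section GenericClosure

variable (K : Type*) [Field K] (ι : Type*)

abbrev GenericClosure : Type _ := AlgebraicClosure (FractionRing (MvPolynomial ι K))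

noncomputable def GenericClosure.X (i : ι) : GenericClosure K ι :=
  algebraMap (FractionRing (MvPolynomial ι K)) _ (algebraMap _ _ (.X i : MvPolynomial ι K))

theorem GenericClosure.X_injective : Injective (X K ι) := fun _ _ h =>
  MvPolynomial.X_injective <| IsFractionRing.injective (MvPolynomial ι K) (FractionRing _) <|
    (algebraMap (FractionRing (MvPolynomial ι K)) (GenericClosure K ι)).injective h

theorem GenericClosure.exists_ringEquiv_X (e : Equiv.Perm ι) :
    ∃ σ : GenericClosure K ι ≃+* GenericClosure K ι, ∀ i, σ (X K ι i) = X K ι (e i) := by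
  refine ⟨IsAlgClosure.equivOfEquiv _ _ (IsFractionRing.ringEquivOfRingEquiv
    (K := FractionRing (MvPolynomial ι K)) (L := FractionRing (MvPolynomial ι K))
    (MvPolynomial.renameEquiv K e).toRingEquiv), fun i => ?_⟩
  rw [X, IsAlgClosure.equivOfEquiv_algebraMap, IsFractionRing.ringEquivOfRingEquiv_algebraMap]
  simp [X]

end GenericClosure

theorem realize_sumElim_ringEquiv {M : Type*} [Ring M] [Ring.CompatibleRing M] {α β : Type*}
    (σ : M ≃+* M) (ψ : Language.ring.Formula (α ⊕ β)) (b : α → M) {p : β → M}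
    (hp : ∀ k, σ (p k) = p k) :
    ψ.Realize (Sum.elim (σ ∘ b) p) ↔ ψ.Realize (Sum.elim b p) := by
  have hcomp : σ ∘ Sum.elim b p = Sum.elim (σ ∘ b) p := by
    ext (k | k)
    · rfl
    · exact hp k
  rw [← hcomp]
  exact StrongHomClass.realize_formula (Ring.languageEquivEquivRingEquiv.symm σ) ψ

theorem realize_quadFormula {M : Type*} [Ring M] [Ring.CompatibleRing M] (z : M)
    (b : Fin 2 → M) :
    quadFormula.Realize (Sum.elim (fun _ => z) b) ↔ z * z + b 0 * z + b 1 = 0 := by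
  simp only [quadFormula, Formula.realize_equal, Ring.realize_add, Ring.realize_mul,
    Term.realize_var, Sum.elim_inl, Sum.elim_inr, Ring.realize_zero]

theorem Fin.exists_swap_zero_preserves_pair :
    ∀ u v : Fin 4, u ≠ v → ∃ s : Fin 4, s ≠ 0 ∧
      (Equiv.swap 0 s u = u ∧ Equiv.swap 0 s v = v ∨ Equiv.swap 0 s u = v ∧ Equiv.swap 0 s v = u) := by
  decide

section Quadratics

variable {M : Type*} [CommRing M]

def quadCoeffs (x y : M) : Fin 2 → M := ![-(x + y), x * y]

theorem quadCoeffs_comm (x y : M) : quadCoeffs x y = quadCoeffs y x := by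
  ext k
  fin_cases k <;> simp [quadCoeffs, add_comm, mul_comm]

theorem comp_quadCoeffs {N F : Type*} [CommRing N] [FunLike F M N] [RingHomClass F M N] (σ : F)
    (x y : M) : σ ∘ quadCoeffs x y = quadCoeffs (σ x) (σ y) := by
  ext k
  fin_cases k <;> simp [quadCoeffs]

theorem realize_quadFormula_quadCoeffs [IsDomain M] [Ring.CompatibleRing M] (z x y : M) :
    quadFormula.Realize (Sum.elim (fun _ => z) (quadCoeffs x y)) ↔ z = x ∨ z = y := by
  have hfactor : z * z + -(x + y) * z + x * y = (z - x) * (z - y) := by ring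
  rw [realize_quadFormula, quadCoeffs, Matrix.cons_val_zero, Matrix.cons_val_one,
    Matrix.cons_val_fin_one, hfactor, mul_eq_zero, sub_eq_zero, sub_eq_zero]

open scoped Classical in
noncomputable def quadCoeffsOfPairs (t : Fin 4 → M) : Finset (Fin 2 → M) :=
  Finset.univ.offDiag.image fun p => quadCoeffs (t p.1) (t p.2)

theorem quadCoeffs_mem_quadCoeffsOfPairs (t : Fin 4 → M) {i j : Fin 4} (hij : i ≠ j) :
    quadCoeffs (t i) (t j) ∈ quadCoeffsOfPairs t := by
  classical
  exact Finset.mem_image.2 ⟨(i, j), by simpa using hij, rfl⟩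

theorem not_forall_realize_iff_quadFormula [IsDomain M] [Ring.CompatibleRing M] {t : Fin 4 → M}
    (ht : Injective t) (hσ : ∀ s, ∃ σ : M ≃+* M, ∀ i, σ (t i) = t (Equiv.swap 0 s i))
    (ψ : Language.ring.Formula (Fin 2 ⊕ (Fin 1 × Fin 2))) {c : Fin 1 → Fin 2 → M}
    (hc : ∀ j, c j ∈ quadCoeffsOfPairs t) :
    ¬ ∀ b ∈ quadCoeffsOfPairs t, (ψ.Realize (Sum.elim b fun jk => c jk.1 jk.2) ↔
      quadFormula.Realize (Sum.elim (fun _ => t 0) b)) := by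
  classical
  intro hψ
  obtain ⟨⟨u, v⟩, huv, hcuv⟩ := Finset.mem_image.1 (hc 0)
  obtain ⟨s, hs0, hswap⟩ := Fin.exists_swap_zero_preserves_pair u v (Finset.mem_offDiag.1 huv).2.2
  obtain ⟨w, hw0, hws⟩ := (by decide : ∀ s : Fin 4, ∃ w : Fin 4, w ≠ 0 ∧ w ≠ s) s
  obtain ⟨σ, hσt⟩ := hσ s
  have hσc : ∀ jk : Fin 1 × Fin 2, σ (c jk.1 jk.2) = c jk.1 jk.2 := by
    rintro ⟨j, k⟩
    rw [Subsingleton.elim j 0, ← hcuv]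
    refine congrFun (?_ : σ ∘ quadCoeffs (t u) (t v) = _) k
    rw [comp_quadCoeffs, hσt, hσt]
    rcases hswap with ⟨hu, hv⟩ | ⟨hu, hv⟩
    · rw [hu, hv]
    · rw [hu, hv, quadCoeffs_comm]
  have hσb : σ ∘ quadCoeffs (t 0) (t w) = quadCoeffs (t s) (t w) := by
    rw [comp_quadCoeffs, hσt, hσt, Equiv.swap_apply_left,
      Equiv.swap_apply_of_ne_of_ne hw0 hws]
  have hψ0w : ψ.Realize (Sum.elim (quadCoeffs (t 0) (t w)) fun jk => c jk.1 jk.2) :=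
    (hψ _ (quadCoeffs_mem_quadCoeffsOfPairs t hw0.symm)).2
      ((realize_quadFormula_quadCoeffs _ _ _).2 (Or.inl rfl))
  have hψsw : ψ.Realize (Sum.elim (quadCoeffs (t s) (t w)) fun jk => c jk.1 jk.2) := by
    rw [← hσb, realize_sumElim_ringEquiv σ ψ _ hσc]
    exact hψ0w
  rcases (realize_quadFormula_quadCoeffs _ _ _).1
      ((hψ _ (quadCoeffs_mem_quadCoeffsOfPairs t hws.symm)).1 hψsw) with h | h
  · exact hs0 (ht h).symm
  · exact hw0 (ht h).symm

end Quadratics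

theorem stmt_19 : ¬ UDTFSRankLE.{w} Language.ring (Theory.ACF 0) quadFormula 1 := by
  rintro ⟨L₀, ψ, H⟩
  have : CharZero (ULift.{w} ℚ) := (ULift.ringEquiv (R := ℚ)).toRingHom.charZero
  let M := GenericClosure (ULift.{w} ℚ) (Fin 4)
  let _ := Ring.compatibleRingOfRing M
  have : CharP M 0 := CharP.ofCharZero M
  let t := GenericClosure.X (ULift.{w} ℚ) (Fin 4)
  obtain ⟨ℓ, c, hcB, hc⟩ := H M inferInstance (quadCoeffsOfPairs t)
    ⟨_, quadCoeffs_mem_quadCoeffsOfPairs t zero_ne_one⟩ fun _ => t 0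
  exact not_forall_realize_iff_quadFormula (GenericClosure.X_injective _ _)
    (fun s => GenericClosure.exists_ringEquiv_X _ _ (Equiv.swap 0 s)) (ψ ℓ) hcB hc
end
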